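/- arXiv:1706.05290 — 8 statements merged into one kernel-verified Lean document; each statement's English description precedes it below -/
import Mathlib

section
/- Every v ∈ D with v ≤ g(v) componentwise satisfies v ≤ v^max componentwise, where v^max := 1_n + 2·L_red⁻¹ q. -/
open Finset Matrix

noncomputable section

/-- Extension of a voltage vector `v ∈ ℝⁿ` to all buses `{0,1,…,n}`,
with the slack-bus convention `v₀ = 1`. -/
def extV {n : ℕ} (v : Fin n → ℝ) : Fin (n + 1) → ℝ := Fin.cons (1 : ℝ) v

/-- The domain `D = {v ∈ ℝⁿ : vᵢ > 0 ∀ i, vᵢ vₖ ≥ sᵢₖ² on every edge}` (with `v₀ = 1`). -/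
def memD {n : ℕ} (B : Matrix (Fin (n + 1)) (Fin (n + 1)) ℝ)
    (s : Fin (n + 1) → Fin (n + 1) → ℝ) (v : Fin n → ℝ) : Prop :=
  (∀ i, 0 < v i) ∧ ∀ i k, 0 < B i k → s i k ^ 2 ≤ extV v i * extV v k

/-- The fixed-point map `g` with
`gᵢ(v) = qᵢ/𝐁ᵢ + Σ_{k ∈ N(i)} (Bᵢₖ/𝐁ᵢ)·√(vᵢvₖ − sᵢₖ²)`. -/
def gmap {n : ℕ} (B : Matrix (Fin (n + 1)) (Fin (n + 1)) ℝ)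
    (s : Fin (n + 1) → Fin (n + 1) → ℝ) (q : Fin n → ℝ) (v : Fin n → ℝ) :
    Fin n → ℝ := fun i =>
  q i / (∑ k, B i.succ k) +
    ∑ k ∈ Finset.univ.filter (fun k => 0 < B i.succ k),
      (B i.succ k / (∑ k', B i.succ k')) *
        Real.sqrt (extV v i.succ * extV v k - s i.succ k ^ 2)

/-- The reduced Laplacian `L_red` (Laplacian of the weighted graph with the
row and column of vertex `0` deleted). -/
def Lred {n : ℕ} (B : Matrix (Fin (n + 1)) (Fin (n + 1)) ℝ) :
    Matrix (Fin n) (Fin n) ℝ := fun i k =>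
  if i = k then ∑ j, B i.succ j else -B i.succ k.succ

/-- `v^max := 1ₙ + 2·L_red⁻¹ q`. -/
def vmax {n : ℕ} (B : Matrix (Fin (n + 1)) (Fin (n + 1)) ℝ) (q : Fin n → ℝ) :
    Fin n → ℝ := fun i => 1 + 2 * ((Lred B)⁻¹ *ᵥ q) i


/-!
Bounding each square root by the arithmetic mean, `√(vᵢvₖ − sᵢₖ²) ≤ (vᵢ + vₖ)/2`, turns
`v ≤ g(v)` into the linear inequality `L_red (v − 1) ≤ 2q`, because the Laplacian kills
constants and `v₀ = 1`. As `L_red (v^max − 1) = 2q`, it remains to see that `L_red` is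
inverse-positive. This is the discrete minimum principle: extend `x` by `x₀ = 0`; at a vertex
where a negative minimum of `x` is attained, `(L_red x)ᵢ ≥ 0` forces every neighbour to attain
it too, so by connectedness the minimum spreads to the slack bus, where the value is `0`.
-/

theorem Real.sqrt_mul_sub_sq_le_add_div_two {a b : ℝ} (ha : 0 ≤ a) (hb : 0 ≤ b) (c : ℝ) :
    √(a * b - c ^ 2) ≤ (a + b) / 2 :=
  calc √(a * b - c ^ 2) ≤ √(a * b) := Real.sqrt_le_sqrt (by nlinarith [sq_nonneg c])
    _ ≤ (a + b) / 2 := by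
      nlinarith [Real.sq_sqrt (mul_nonneg ha hb), Real.sqrt_nonneg (a * b), sq_nonneg (a - b)]

theorem eq_of_sum_mul_sub_nonneg {ι : Type*} [Fintype ι] {b y : ι → ℝ} {c : ℝ}
    (hb : 0 ≤ b) (hc : ∀ j, c ≤ y j) (hsum : 0 ≤ ∑ j, b j * (c - y j))
    {j : ι} (hj : 0 < b j) : y j = c := by
  have hterm : ∀ k ∈ univ, b k * (c - y k) ≤ 0 :=
    fun k _ => mul_nonpos_of_nonneg_of_nonpos (hb k) (sub_nonpos.2 (hc k))
  have hzero := (sum_eq_zero_iff_of_nonpos hterm).1 (le_antisymm (sum_nonpos hterm) hsum) j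
    (mem_univ j)
  have := (mul_eq_zero.1 hzero).resolve_left hj.ne'
  linarith

section Lred

variable {n : ℕ} {B : Matrix (Fin (n + 1)) (Fin (n + 1)) ℝ} {G : SimpleGraph (Fin (n + 1))}

theorem lred_mulVec_apply (hBdiag : ∀ i, B i i = 0) (x : Fin n → ℝ) (i : Fin n) :
    (Lred B *ᵥ x) i = ∑ j, B i.succ j * (x i - (Fin.cons 0 x : Fin (n + 1) → ℝ) j) := by
  have hentry : ∀ k, Lred B i k = (if i = k then ∑ j, B i.succ j else 0) - B i.succ k.succ := by
    intro k
    by_cases h : i = k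
    · subst h; simp [Lred, hBdiag]
    · simp [Lred, h]
  simp only [mulVec, dotProduct, hentry, sub_mul, sum_sub_distrib, ite_mul, zero_mul,
    sum_ite_eq, mem_univ, if_true, mul_sub, Fin.sum_univ_succ (f := fun j => B i.succ j * x i),
    Fin.sum_univ_succ (f := fun j => B i.succ j * (Fin.cons 0 x : Fin (n + 1) → ℝ) j),
    Fin.cons_zero, Fin.cons_succ, sum_mul]
  ring

theorem lred_mulVec_sub_one_apply (hBdiag : ∀ i, B i i = 0) (v : Fin n → ℝ) (i : Fin n) :
    (Lred B *ᵥ (v - 1)) i = ∑ j, B i.succ j * (extV v i.succ - extV v j) := by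
  rw [lred_mulVec_apply hBdiag]
  refine sum_congr rfl fun j _ => ?_
  cases j using Fin.cases <;> simp [extV]

theorem sum_row_succ_pos (hBnonneg : ∀ i k, 0 ≤ B i k)
    (hGadj : ∀ i k, G.Adj i k ↔ 0 < B i k) (hconn : G.Preconnected) (i : Fin n) :
    0 < ∑ k, B i.succ k := by
  have hadj := (hconn i.succ 0).some.adj_snd
    (SimpleGraph.Walk.not_nil_of_ne (Fin.succ_ne_zero i))
  exact ((hGadj _ _).1 hadj).trans_le (single_le_sum (fun k _ => hBnonneg _ k) (mem_univ _))

theorem nonneg_of_lred_mulVec_nonneg (hBdiag : ∀ i, B i i = 0) (hBnonneg : ∀ i k, 0 ≤ B i k)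
    (hGadj : ∀ i k, G.Adj i k ↔ 0 < B i k) (hconn : G.Preconnected)
    {x : Fin n → ℝ} (hx : 0 ≤ Lred B *ᵥ x) : 0 ≤ x := by
  intro j
  by_contra! hj
  set y : Fin (n + 1) → ℝ := Fin.cons 0 x
  obtain ⟨a, -, hmin⟩ := exists_min_image univ y univ_nonempty
  have hneg : y a < 0 := (hmin j.succ (mem_univ _)).trans_lt (by simpa [y] using hj)
  obtain ⟨d, -, hfst, hsnd⟩ := (hconn a 0).some.exists_boundary_dart {b | y b = y a} rfl
    (by simpa [y] using hneg.ne')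
  obtain ⟨i, hi⟩ : ∃ i : Fin n, d.fst = i.succ := by
    refine Fin.eq_zero_or_eq_succ d.fst |>.resolve_left fun h0 => ?_
    simp only [Set.mem_ofPred_eq, h0] at hfst
    simp [y, ← hfst] at hneg
  simp only [Set.mem_ofPred_eq, hi] at hfst hsnd
  have hrow := hx i
  rw [Pi.zero_apply, lred_mulVec_apply hBdiag] at hrow
  have hadj := (hGadj _ _).1 d.adj
  rw [hi] at hadj
  refine hsnd (eq_of_sum_mul_sub_nonneg (hBnonneg i.succ) (fun k => ?_) ?_ hadj)
  · simpa [hfst] using hmin k (mem_univ k)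
  · simpa [y, ← hfst] using hrow

theorem isUnit_det_lred (hBdiag : ∀ i, B i i = 0) (hBnonneg : ∀ i k, 0 ≤ B i k)
    (hGadj : ∀ i k, G.Adj i k ↔ 0 < B i k) (hconn : G.Preconnected) : IsUnit (Lred B).det := by
  refine isUnit_iff_ne_zero.2 fun hdet => ?_
  obtain ⟨y, hy0, hy⟩ := exists_mulVec_eq_zero_iff.2 hdet
  have hpos := nonneg_of_lred_mulVec_nonneg hBdiag hBnonneg hGadj hconn (x := y) hy.ge
  have hneg := nonneg_of_lred_mulVec_nonneg hBdiag hBnonneg hGadj hconn (x := -y)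
    (by rw [mulVec_neg, hy, neg_zero])
  exact hy0 (le_antisymm (neg_nonneg.1 hneg) hpos)

theorem laplacian_row_le_of_le_gmap (hBnonneg : ∀ i k, 0 ≤ B i k)
    {s : Fin (n + 1) → Fin (n + 1) → ℝ} {q v : Fin n → ℝ}
    (hv : ∀ i, 0 < v i) {i : Fin n} (hσ : 0 < ∑ k, B i.succ k) (hvi : v i ≤ gmap B s q v i) :
    ∑ k, B i.succ k * (extV v i.succ - extV v k) ≤ 2 * q i := by
  set σ := ∑ k, B i.succ k
  set y := extV v
  have hy : ∀ k, 0 ≤ y k := fun k => by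
    cases k using Fin.cases <;> simp [y, extV, (hv _).le]
  have hmean : ∑ k, B i.succ k / σ * ((y i.succ + y k) / 2)
      = y i.succ - (∑ k, B i.succ k * (y i.succ - y k)) / (2 * σ) := by
    have hsplit : ∀ k, B i.succ k / σ * ((y i.succ + y k) / 2)
        = B i.succ k * y i.succ / σ - B i.succ k * (y i.succ - y k) / (2 * σ) := fun k => by
      field_simp; ring
    rw [sum_congr rfl fun k _ => hsplit k, sum_sub_distrib, ← sum_div, ← sum_div, ← sum_mul,
      mul_div_cancel_left₀ _ hσ.ne']
  have hg : gmap B s q v i ≤ q i / σ + ∑ k, B i.succ k / σ * ((y i.succ + y k) / 2) := by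
    have hterm : ∀ k, 0 ≤ B i.succ k / σ * ((y i.succ + y k) / 2) := fun k => by
      have := hBnonneg i.succ k; have := hy i.succ; have := hy k; positivity
    unfold gmap
    gcongr
    calc _ ≤ ∑ k ∈ univ.filter (fun k => 0 < B i.succ k),
            B i.succ k / σ * ((y i.succ + y k) / 2) :=
          sum_le_sum fun k _ => mul_le_mul_of_nonneg_left
            (Real.sqrt_mul_sub_sq_le_add_div_two (hy _) (hy _) _)
            (div_nonneg (hBnonneg _ _) hσ.le)
      _ ≤ _ := sum_le_sum_of_subset_of_nonneg (filter_subset _ _) fun k _ _ => hterm k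
  have hyv : y i.succ = v i := Fin.cons_succ _ _ _
  rw [hmean] at hg
  have hdiv : (∑ k, B i.succ k * (y i.succ - y k)) / (2 * σ) ≤ q i / σ := by
    linarith [hvi.trans hg]
  rw [div_le_div_iff₀ (by positivity) hσ] at hdiv
  exact le_of_mul_le_mul_right (by linarith) hσ

end Lred

theorem stmt1_general {n : ℕ}
    (B : Matrix (Fin (n + 1)) (Fin (n + 1)) ℝ)
    (hBdiag : ∀ i, B i i = 0)
    (hBnonneg : ∀ i k, 0 ≤ B i k)
    (G : SimpleGraph (Fin (n + 1)))
    (hGadj : ∀ i k, G.Adj i k ↔ 0 < B i k)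
    (hGtree : G.IsTree)
    (q : Fin n → ℝ)
    (s : Fin (n + 1) → Fin (n + 1) → ℝ)
    (v : Fin n → ℝ) (hv : memD B s v)
    (hvg : ∀ i, v i ≤ gmap B s q v i) :
    ∀ i, v i ≤ vmax B q i := by
  have hconn := hGtree.connected.preconnected
  have hrow : Lred B *ᵥ (v - 1) ≤ (2 : ℝ) • q := fun i => by
    rw [lred_mulVec_sub_one_apply hBdiag, Pi.smul_apply, smul_eq_mul]
    exact laplacian_row_le_of_le_gmap hBnonneg hv.1
      (sum_row_succ_pos hBnonneg hGadj hconn i) (hvg i)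
  have hgap : 0 ≤ (2 : ℝ) • ((Lred B)⁻¹ *ᵥ q) - (v - 1) := by
    refine nonneg_of_lred_mulVec_nonneg hBdiag hBnonneg hGadj hconn ?_
    rw [mulVec_sub, mulVec_smul, mulVec_mulVec,
      mul_nonsing_inv _ (isUnit_det_lred hBdiag hBnonneg hGadj hconn), one_mulVec]
    exact sub_nonneg.2 hrow
  intro i
  have hi := hgap i
  simp only [Pi.sub_apply, Pi.smul_apply, Pi.one_apply, Pi.zero_apply, smul_eq_mul] at hi
  rw [vmax]
  linarith

theorem stmt1 {n : ℕ} (hn : 1 ≤ n)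
    (B : Matrix (Fin (n + 1)) (Fin (n + 1)) ℝ)
    (hBsymm : ∀ i k, B i k = B k i)
    (hBdiag : ∀ i, B i i = 0)
    (hBnonneg : ∀ i k, 0 ≤ B i k)
    (G : SimpleGraph (Fin (n + 1)))
    (hGadj : ∀ i k, G.Adj i k ↔ 0 < B i k)
    (hGtree : G.IsTree)
    (q : Fin n → ℝ)
    (s : Fin (n + 1) → Fin (n + 1) → ℝ)
    (hssymm : ∀ i k, s i k = s k i)
    (v : Fin n → ℝ) (hv : memD B s v)
    (hvg : ∀ i, v i ≤ gmap B s q v i) :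
    ∀ i, v i ≤ vmax B q i :=
  stmt1_general B hBdiag hBnonneg G hGadj hGtree q s v hv hvg
end
end

section
/- If v^max := 1_n + 2·L_red⁻¹ q belongs to D, then g(v^max) ≤ v^max componentwise. -/
/-!
AM–GM gives `√(vᵢvₖ − sᵢₖ²) ≤ (vᵢ + vₖ)/2`, so `gᵢ(v) ≤ (qᵢ + Σₖ Bᵢₖ (vᵢ + vₖ)/2) / 𝐁ᵢ`.
For `v = 1 + 2w` with `L_red w = q` (and `w₀ = 0` at the slack bus) we have
`qᵢ = Σₖ Bᵢₖ (wᵢ − wₖ)`, and the right-hand side collapses to exactly `vᵢ`.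
`L_red` is invertible because its quadratic form is the Dirichlet energy
`½ Σᵢₖ Bᵢₖ (yᵢ − yₖ)²` of `y = (0, x)`, which vanishes only for `y` constant on the
connected graph.
-/

open Finset Matrix

noncomputable section

lemma Real.sqrt_mul_sub_sq_le_half_add {a b : ℝ} (hab : 0 ≤ a + b) (s : ℝ) :
    √(a * b - s ^ 2) ≤ (a + b) / 2 :=
  Real.sqrt_le_iff.mpr ⟨by positivity, by nlinarith [sq_nonneg (a - b), sq_nonneg s]⟩

lemma sum_mul_sq_sub_eq_two_mul_sum {ι : Type*} [Fintype ι] {B : ι → ι → ℝ}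
    (hB : ∀ i k, B i k = B k i) (y : ι → ℝ) :
    ∑ i, ∑ k, B i k * (y i - y k) ^ 2 = 2 * ∑ i, y i * ∑ k, B i k * (y i - y k) := by
  have hswap : ∑ i, ∑ k, B i k * y k * (y i - y k) = -∑ i, ∑ k, B i k * y i * (y i - y k) := by
    rw [Finset.sum_comm, ← Finset.sum_neg_distrib]
    refine Finset.sum_congr rfl fun i _ => ?_
    rw [← Finset.sum_neg_distrib]
    exact Finset.sum_congr rfl fun k _ => by rw [hB]; ring
  calc ∑ i, ∑ k, B i k * (y i - y k) ^ 2
      = ∑ i, ∑ k, B i k * y i * (y i - y k) - ∑ i, ∑ k, B i k * y k * (y i - y k) := by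
        simp only [← Finset.sum_sub_distrib]; congr! 2; ring
    _ = 2 * ∑ i, y i * ∑ k, B i k * (y i - y k) := by
        rw [hswap, sub_neg_eq_add, ← two_mul]
        simp only [Finset.mul_sum]; congr! 3; ring

lemma SimpleGraph.Reachable.eq_of_forall_adj {V α : Type*} {G : SimpleGraph V} {f : V → α}
    (h : ∀ a b, G.Adj a b → f a = f b) {u v : V} (huv : G.Reachable u v) : f u = f v := by
  obtain ⟨p⟩ := huv
  induction p with
  | nil => rfl
  | cons hadj _ ih => exact (h _ _ hadj).trans ih

lemma eq_of_sum_mul_sq_sub_eq_zero {ι : Type*} [Fintype ι] {B : ι → ι → ℝ}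
    (hB : ∀ i k, 0 ≤ B i k) {y : ι → ℝ} (h : ∑ i, ∑ k, B i k * (y i - y k) ^ 2 = 0)
    {a b : ι} (hab : 0 < B a b) : y a = y b := by
  have hterm : B a b * (y a - y b) ^ 2 = 0 := by
    have hrow := (Finset.sum_eq_zero_iff_of_nonneg fun i _ =>
      Finset.sum_nonneg fun k _ => mul_nonneg (hB i k) (sq_nonneg _)).mp h a (Finset.mem_univ a)
    exact (Finset.sum_eq_zero_iff_of_nonneg fun k _ =>
      mul_nonneg (hB a k) (sq_nonneg _)).mp hrow b (Finset.mem_univ b)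
  rwa [mul_eq_zero, or_iff_right hab.ne', sq_eq_zero_iff, sub_eq_zero] at hterm

section ReducedLaplacian

variable {n : ℕ} {B : Matrix (Fin (n + 1)) (Fin (n + 1)) ℝ}

lemma Lred_mulVec_apply (hBdiag : ∀ i, B i i = 0) (x : Fin n → ℝ) (i : Fin n) :
    (Lred B *ᵥ x) i = ∑ k, B i.succ k * (vecCons 0 x i.succ - vecCons 0 x k) := by
  have hentry : ∀ k, Lred B i k * x k =
      (if i = k then (∑ j, B i.succ j) * x i else 0) - B i.succ k.succ * x k := by
    intro k
    by_cases h : i = k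
    · subst h; simp [Lred, hBdiag]
    · simp [Lred, h]
  rw [mulVec, dotProduct, Finset.sum_congr rfl fun k _ => hentry k, Finset.sum_sub_distrib,
    Finset.sum_ite_eq, if_pos (Finset.mem_univ _)]
  simp only [mul_sub, Finset.sum_sub_distrib, ← Finset.sum_mul, cons_val_succ,
    Fin.sum_univ_succ (f := fun k => B i.succ k * vecCons 0 x k), cons_val_zero, mul_zero, zero_add]

lemma isUnit_det_Lred (hBsymm : ∀ i k, B i k = B k i) (hBdiag : ∀ i, B i i = 0)
    (hBnonneg : ∀ i k, 0 ≤ B i k) {G : SimpleGraph (Fin (n + 1))}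
    (hGadj : ∀ i k, G.Adj i k → 0 < B i k) (hG : G.Connected) : IsUnit (Lred B).det := by
  rw [isUnit_iff_ne_zero, Ne, ← exists_mulVec_eq_zero_iff]
  rintro ⟨x, hx0, hx⟩
  set y : Fin (n + 1) → ℝ := vecCons 0 x with hy
  have henergy : ∑ i, ∑ k, B i k * (y i - y k) ^ 2 = 0 := by
    have hrow : ∀ i : Fin n, ∑ k, B i.succ k * (y i.succ - y k) = 0 := fun i => by
      rw [hy, ← Lred_mulVec_apply hBdiag, hx, Pi.zero_apply]
    rw [sum_mul_sq_sub_eq_two_mul_sum hBsymm, Fin.sum_univ_succ]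
    simp only [hrow, mul_zero, Finset.sum_const_zero, add_zero]
    simp [hy]
  have hconst : ∀ a b, G.Adj a b → y a = y b := fun a b hab =>
    eq_of_sum_mul_sq_sub_eq_zero hBnonneg henergy (hGadj a b hab)
  refine hx0 (funext fun i => ?_)
  simpa [hy] using (hG.preconnected i.succ 0).eq_of_forall_adj hconst

lemma row_sum_succ_pos (hBnonneg : ∀ i k, 0 ≤ B i k) {G : SimpleGraph (Fin (n + 1))}
    (hGadj : ∀ i k, G.Adj i k → 0 < B i k) (hG : G.Connected) (i : Fin n) :
    0 < ∑ k, B i.succ k := by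
  obtain ⟨p⟩ := hG.preconnected i.succ 0
  exact Finset.sum_pos' (fun k _ => hBnonneg _ _)
    ⟨_, Finset.mem_univ _, hGadj _ _ (p.adj_snd (p.not_nil_of_ne (Fin.succ_ne_zero i)))⟩

lemma extV_nonneg {v : Fin n → ℝ} (hv : ∀ i, 0 < v i) (k : Fin (n + 1)) : 0 ≤ extV v k := by
  cases k using Fin.cases <;> simp [extV, (hv _).le]

lemma gmap_le (hBnonneg : ∀ i k, 0 ≤ B i k) (s : Fin (n + 1) → Fin (n + 1) → ℝ) (q : Fin n → ℝ)
    {v : Fin n → ℝ} (hv : ∀ k, 0 ≤ extV v k) (i : Fin n) :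
    gmap B s q v i ≤
      (q i + ∑ k, B i.succ k * ((extV v i.succ + extV v k) / 2)) / ∑ k, B i.succ k := by
  have hd : 0 ≤ ∑ k, B i.succ k := Finset.sum_nonneg fun k _ => hBnonneg _ _
  calc gmap B s q v i
      ≤ q i / (∑ k, B i.succ k) + ∑ k ∈ Finset.univ.filter (fun k => 0 < B i.succ k),
          B i.succ k / (∑ k', B i.succ k') * ((extV v i.succ + extV v k) / 2) := by
        unfold gmap
        gcongr with k
        · exact div_nonneg (hBnonneg _ _) hd
        · exact Real.sqrt_mul_sub_sq_le_half_add (add_nonneg (hv _) (hv _)) _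
    _ = q i / (∑ k, B i.succ k) +
          ∑ k, B i.succ k / (∑ k', B i.succ k') * ((extV v i.succ + extV v k) / 2) := by
        congr 1
        exact Finset.sum_filter_of_ne fun k _ hk =>
          (hBnonneg _ _).lt_of_ne' (div_ne_zero_iff.mp (left_ne_zero_of_mul hk)).1
    _ = _ := by
        rw [add_div, Finset.sum_div]
        congr! 2 with k
        ring

end ReducedLaplacian

theorem stmt2_general {n : ℕ}
    (B : Matrix (Fin (n + 1)) (Fin (n + 1)) ℝ)
    (hBsymm : ∀ i k, B i k = B k i)
    (hBdiag : ∀ i, B i i = 0)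
    (hBnonneg : ∀ i k, 0 ≤ B i k)
    (G : SimpleGraph (Fin (n + 1)))
    (hGadj : ∀ i k, G.Adj i k ↔ 0 < B i k)
    (hGtree : G.IsTree)
    (q : Fin n → ℝ)
    (s : Fin (n + 1) → Fin (n + 1) → ℝ)
    (hmem : memD B s (vmax B q)) :
    ∀ i, gmap B s q (vmax B q) i ≤ vmax B q i := by
  intro i
  have hGadj' : ∀ i k, G.Adj i k → 0 < B i k := fun i k => (hGadj i k).mp
  set w := (Lred B)⁻¹ *ᵥ q
  have hLw : Lred B *ᵥ w = q := by
    rw [mulVec_mulVec, mul_nonsing_inv _ (isUnit_det_Lred hBsymm hBdiag hBnonneg hGadj'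
      hGtree.connected), one_mulVec]
  have hqi : q i = ∑ k, B i.succ k * (vecCons 0 w i.succ - vecCons 0 w k) := by
    rw [← Lred_mulVec_apply hBdiag, hLw]
  have hext : ∀ k, extV (vmax B q) k = 1 + 2 * vecCons 0 w k := fun k => by
    cases k using Fin.cases <;> simp [extV, vmax, w]
  calc gmap B s q (vmax B q) i
      ≤ (q i + ∑ k, B i.succ k * ((extV (vmax B q) i.succ + extV (vmax B q) k) / 2)) /
          ∑ k, B i.succ k := gmap_le hBnonneg s q (extV_nonneg hmem.1) i
    _ = vmax B q i := by
      rw [hqi, ← Finset.sum_add_distrib,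
        div_eq_iff (row_sum_succ_pos hBnonneg hGadj' hGtree.connected i).ne', Finset.mul_sum]
      refine Finset.sum_congr rfl fun k _ => ?_
      rw [hext, hext, show vmax B q i = 1 + 2 * vecCons 0 w i.succ from rfl]
      ring

theorem stmt2 {n : ℕ} (hn : 1 ≤ n)
    (B : Matrix (Fin (n + 1)) (Fin (n + 1)) ℝ)
    (hBsymm : ∀ i k, B i k = B k i)
    (hBdiag : ∀ i, B i i = 0)
    (hBnonneg : ∀ i k, 0 ≤ B i k)
    (G : SimpleGraph (Fin (n + 1)))
    (hGadj : ∀ i k, G.Adj i k ↔ 0 < B i k)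
    (hGtree : G.IsTree)
    (q : Fin n → ℝ)
    (s : Fin (n + 1) → Fin (n + 1) → ℝ)
    (hssymm : ∀ i k, s i k = s k i)
    (hmem : memD B s (vmax B q)) :
    ∀ i, gmap B s q (vmax B q) i ≤ vmax B q i :=
  stmt2_general B hBsymm hBdiag hBnonneg G hGadj hGtree q s hmem
end
end

section
/- The high-voltage solution is monotone in the reactive injections: suppose q ≤ q̂ componentwise, let g (resp. ĝ) denote the map built from the data (B, s, q) (resp. (B, s, q̂)), and suppose g has a fixed point v* ∈ D such that v ≤ v* for every v ∈ D with v ≤ g(v), and ĝ has a fixed point v̂* ∈ D such that v ≤ v̂* for every v ∈ D with v ≤ ĝ(v). Then v* ≤ v̂* componentwise. -/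
open Finset Matrix

noncomputable section

theorem Bsum_pos {n : ℕ} (B : Matrix (Fin (n + 1)) (Fin (n + 1)) ℝ)
    (hBnonneg : ∀ i k, 0 ≤ B i k)
    (G : SimpleGraph (Fin (n + 1)))
    (hGadj : ∀ i k, G.Adj i k ↔ 0 < B i k)
    (hGtree : G.IsTree) (i : Fin n) : 0 < ∑ k, B i.succ k := by
  obtain ⟨w⟩ := hGtree.isConnected.preconnected i.succ 0
  cases w with
  | cons h p =>
    rename_i b
    have hb : 0 < B i.succ b := (hGadj _ _).mp h
    have : B i.succ b ≤ ∑ k, B i.succ k :=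
      Finset.single_le_sum (fun k _ => hBnonneg _ k) (Finset.mem_univ b)
    linarith

theorem stmt4 {n : ℕ} (hn : 1 ≤ n)
    (B : Matrix (Fin (n + 1)) (Fin (n + 1)) ℝ)
    (hBsymm : ∀ i k, B i k = B k i)
    (hBdiag : ∀ i, B i i = 0)
    (hBnonneg : ∀ i k, 0 ≤ B i k)
    (G : SimpleGraph (Fin (n + 1)))
    (hGadj : ∀ i k, G.Adj i k ↔ 0 < B i k)
    (hGtree : G.IsTree)
    (s : Fin (n + 1) → Fin (n + 1) → ℝ)
    (hssymm : ∀ i k, s i k = s k i)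
    (q qhat : Fin n → ℝ) (hqle : ∀ i, q i ≤ qhat i)
    (vstar vhatstar : Fin n → ℝ)
    (hvstarD : memD B s vstar) (hvstarFix : gmap B s q vstar = vstar)
    (hvstarMax : ∀ v, memD B s v → (∀ i, v i ≤ gmap B s q v i) → ∀ i, v i ≤ vstar i)
    (hvhatD : memD B s vhatstar) (hvhatFix : gmap B s qhat vhatstar = vhatstar)
    (hvhatMax : ∀ v, memD B s v → (∀ i, v i ≤ gmap B s qhat v i) → ∀ i, v i ≤ vhatstar i) :
    ∀ i, vstar i ≤ vhatstar i := by
  intro i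
  apply hvhatMax vstar hvstarD _ i
  intro j
  have hfix : vstar j = gmap B s q vstar j := (congrFun hvstarFix j).symm
  rw [hfix]
  unfold gmap
  have hS := Bsum_pos B hBnonneg G hGadj hGtree j
  gcongr
  exact hqle j
end
end

section
/- Let a, b ∈ ℝⁿ with a ≤ b componentwise and let F : [a,b] → [a,b] be continuous and monotone (x ≤ x' componentwise implies F(x) ≤ F(x') componentwise). Define A = {x ∈ [a,b] : F(x) ≥ x} and B = {x ∈ [a,b] : F(x) ≤ x}. Then F has a fixed point x* with x ≤ x* for all x ∈ A (a maximal fixed point) and a fixed point x_* with x_* ≤ x for all x ∈ B (a minimal fixed point); moreover the iteration x^{(0)} = b, x^{(i+1)} = F(x^{(i)}) converges to x*. -/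
open Filter

theorem stmt5 {n : ℕ} (a b : Fin n → ℝ) (hab : a ≤ b)
    (F : (Fin n → ℝ) → (Fin n → ℝ))
    (hmaps : ∀ x ∈ Set.Icc a b, F x ∈ Set.Icc a b)
    (hcont : ContinuousOn F (Set.Icc a b))
    (hmono : ∀ x ∈ Set.Icc a b, ∀ x' ∈ Set.Icc a b, x ≤ x' → F x ≤ F x') :
    (∃ xstar ∈ Set.Icc a b, F xstar = xstar ∧
        (∀ x ∈ Set.Icc a b, x ≤ F x → x ≤ xstar) ∧
        Tendsto (fun i => F^[i] b) atTop (nhds xstar)) ∧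
      ∃ xlow ∈ Set.Icc a b, F xlow = xlow ∧ ∀ x ∈ Set.Icc a b, F x ≤ x → xlow ≤ x := by
  have hbmem : b ∈ Set.Icc a b := ⟨hab, le_refl b⟩
  have hamem : a ∈ Set.Icc a b := ⟨le_refl a, hab⟩
  constructor
  · -- sequence from b
    set s : ℕ → (Fin n → ℝ) := fun i => F^[i] b with hs
    have hsmem : ∀ i, s i ∈ Set.Icc a b := by
      intro i; induction i with
      | zero => simpa [hs] using hbmem
      | succ i ih => simpa [hs, Function.iterate_succ_apply'] using hmaps _ ih
    have hstep : ∀ i, s (i + 1) ≤ s i := by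
      intro i; induction i with
      | zero => simpa [hs] using (hmaps b hbmem).2
      | succ i ih =>
        have := hmono _ (hsmem (i + 1)) _ (hsmem i) ih
        simpa [hs, Function.iterate_succ_apply'] using this
    have hanti : Antitone s := antitone_nat_of_succ_le hstep
    set L : Fin n → ℝ := fun j => ⨅ i, s i j with hL
    have hbdd : ∀ j, BddBelow (Set.range fun i => s i j) := by
      intro j; exact ⟨a j, by rintro _ ⟨i, rfl⟩; exact (hsmem i).1 j⟩
    have htend : Tendsto s atTop (nhds L) := by
      rw [tendsto_pi_nhds]
      intro j
      exact tendsto_atTop_ciInf (fun i k hik => hanti hik j) (hbdd j)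
    have hLmem : L ∈ Set.Icc a b := by
      constructor
      · intro j; exact le_ciInf fun i => (hsmem i).1 j
      · intro j; exact (ciInf_le (hbdd j) 0).trans ((hsmem 0).2 j)
    have hfix : F L = L := by
      have h1 : Tendsto (fun i => F (s i)) atTop (nhds (F L)) := by
        apply (hcont L hLmem).tendsto.comp
        exact tendsto_nhdsWithin_of_tendsto_nhds_of_eventually_within _ htend
          (Eventually.of_forall hsmem)
      have h2 : Tendsto (fun i => F (s i)) atTop (nhds L) := by
        have he : (fun i => F (s i)) = fun i => s (i + 1) := by
          funext i; simp [hs, Function.iterate_succ_apply']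
        rw [he]
        exact htend.comp (tendsto_add_atTop_nat 1)
      exact tendsto_nhds_unique h1 h2
    refine ⟨L, hLmem, hfix, ?_, htend⟩
    intro x hx hxF
    have hle : ∀ i, x ≤ s i := by
      intro i; induction i with
      | zero => exact hx.2
      | succ i ih =>
        calc x ≤ F x := hxF
          _ ≤ F (s i) := hmono _ hx _ (hsmem i) ih
          _ = s (i + 1) := (Function.iterate_succ_apply' F i b).symm
    intro j
    exact le_ciInf fun i => hle i j
  · -- sequence from a
    set t : ℕ → (Fin n → ℝ) := fun i => F^[i] a with ht
    have htmem : ∀ i, t i ∈ Set.Icc a b := by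
      intro i; induction i with
      | zero => simpa [ht] using hamem
      | succ i ih => simpa [ht, Function.iterate_succ_apply'] using hmaps _ ih
    have hstep : ∀ i, t i ≤ t (i + 1) := by
      intro i; induction i with
      | zero => simpa [ht] using (hmaps a hamem).1
      | succ i ih =>
        have := hmono _ (htmem i) _ (htmem (i + 1)) ih
        simpa [ht, Function.iterate_succ_apply'] using this
    have hmonot : Monotone t := monotone_nat_of_le_succ hstep
    set M : Fin n → ℝ := fun j => ⨆ i, t i j with hM
    have hbdd : ∀ j, BddAbove (Set.range fun i => t i j) := by
      intro j; exact ⟨b j, by rintro _ ⟨i, rfl⟩; exact (htmem i).2 j⟩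
    have htend : Tendsto t atTop (nhds M) := by
      rw [tendsto_pi_nhds]
      intro j
      exact tendsto_atTop_ciSup (fun i k hik => hmonot hik j) (hbdd j)
    have hMmem : M ∈ Set.Icc a b := by
      constructor
      · intro j; exact ((htmem 0).1 j).trans (le_ciSup (hbdd j) 0)
      · intro j; exact ciSup_le fun i => (htmem i).2 j
    have hfix : F M = M := by
      have h1 : Tendsto (fun i => F (t i)) atTop (nhds (F M)) := by
        apply (hcont M hMmem).tendsto.comp
        exact tendsto_nhdsWithin_of_tendsto_nhds_of_eventually_within _ htend
          (Eventually.of_forall htmem)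
      have h2 : Tendsto (fun i => F (t i)) atTop (nhds M) := by
        have he : (fun i => F (t i)) = fun i => t (i + 1) := by
          funext i; simp [ht, Function.iterate_succ_apply']
        rw [he]
        exact htend.comp (tendsto_add_atTop_nat 1)
      exact tendsto_nhds_unique h1 h2
    refine ⟨M, hMmem, hfix, ?_⟩
    intro x hx hxF
    have hle : ∀ i, t i ≤ x := by
      intro i; induction i with
      | zero => exact hx.1
      | succ i ih =>
        calc t (i + 1) = F (t i) := Function.iterate_succ_apply' F i a
          _ ≤ F x := hmono _ (htmem i) _ hx ih
          _ ≤ x := hxF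
    intro j
    exact ciSup_le fun i => hle i j
end

section
/- Let A ∈ ℝ^{n×n} be an irreducible Z-matrix and suppose there exists x ∈ ℝⁿ with x ≥ 0 entrywise and Ax > 0 entrywise. Then A is invertible and every entry of A⁻¹ is strictly positive. -/
open Matrix

-- If w ≥ 0 and w i = 0, then (A w)_i ≤ 0 for a Z-matrix A.
lemma zaux {n : ℕ} (A : Matrix (Fin n) (Fin n) ℝ)
    (hZ : ∀ i k, i ≠ k → A i k ≤ 0) (w : Fin n → ℝ) (hw : ∀ j, 0 ≤ w j)
    (i : Fin n) (hwi : w i = 0) : (A *ᵥ w) i ≤ 0 := by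
  have : (A *ᵥ w) i = ∑ j, A i j * w j := by simp [Matrix.mulVec, dotProduct]
  rw [this]
  apply Finset.sum_nonpos
  intro j _
  by_cases h : j = i
  · simp [h, hwi]
  · exact mul_nonpos_of_nonpos_of_nonneg (hZ i j (Ne.symm h)) (hw j)

theorem stmt6 {n : ℕ} (A : Matrix (Fin n) (Fin n) ℝ)
    (hZ : ∀ i k, i ≠ k → A i k ≤ 0)
    (hirr : ∀ S : Finset (Fin n), S.Nonempty → S ≠ Finset.univ →
      ∃ i ∈ S, ∃ j, j ∉ S ∧ A i j ≠ 0)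
    (x : Fin n → ℝ) (hx : ∀ i, 0 ≤ x i) (hAx : ∀ i, 0 < (A *ᵥ x) i) :
    IsUnit A.det ∧ ∀ i k, 0 < A⁻¹ i k := by
  rcases Nat.eq_zero_or_pos n with hn | hn
  · subst hn
    refine ⟨by simp [Matrix.det_fin_zero], fun i => i.elim0⟩
  haveI : Nonempty (Fin n) := ⟨⟨0, hn⟩⟩
  -- x is strictly positive
  have hxpos : ∀ i, 0 < x i := by
    intro i
    rcases lt_or_eq_of_le (hx i) with h | h
    · exact h
    · exact absurd (hAx i) (not_lt.2 (zaux A hZ x hx i h.symm))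
  -- B := A * diagonal x is strictly diagonally dominant
  have hmul : ∀ i, (A *ᵥ x) i = ∑ j, A i j * x j := by
    intro i; simp [Matrix.mulVec, dotProduct]
  have hdet : A.det ≠ 0 := by
    have hB : (A * Matrix.diagonal x).det ≠ 0 := by
      apply det_ne_zero_of_sum_row_lt_diag
      intro k
      have h1 : ∀ j, (A * Matrix.diagonal x) k j = A k j * x j := by
        intro j; simp [Matrix.mul_diagonal]
      have key : ∑ j ∈ Finset.univ.erase k, ‖A k j * x j‖ = -∑ j ∈ Finset.univ.erase k, A k j * x j := by
        rw [← Finset.sum_neg_distrib]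
        apply Finset.sum_congr rfl
        intro j hj
        have hjk : j ≠ k := Finset.ne_of_mem_erase hj
        have : A k j * x j ≤ 0 := mul_nonpos_of_nonpos_of_nonneg (hZ k j (Ne.symm hjk)) (hx j)
        rw [Real.norm_eq_abs, abs_of_nonpos this]
      have hsplit : A k k * x k + ∑ j ∈ Finset.univ.erase k, A k j * x j = (A *ᵥ x) k := by
        rw [hmul k, ← Finset.add_sum_erase _ _ (Finset.mem_univ k)]
      have hpos : 0 < A k k * x k + ∑ j ∈ Finset.univ.erase k, A k j * x j := hsplit ▸ hAx k
      have h2 : ∑ j ∈ Finset.univ.erase k, ‖A k j * x j‖ < A k k * x k := by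
        rw [key]; linarith
      have h3 : (0:ℝ) ≤ ∑ j ∈ Finset.univ.erase k, ‖A k j * x j‖ :=
        Finset.sum_nonneg fun j _ => norm_nonneg _
      calc ∑ j ∈ Finset.univ.erase k, ‖(A * Matrix.diagonal x) k j‖
          = ∑ j ∈ Finset.univ.erase k, ‖A k j * x j‖ := by
            apply Finset.sum_congr rfl; intro j _; rw [h1]
        _ < A k k * x k := h2
        _ = ‖(A * Matrix.diagonal x) k k‖ := by
            rw [h1, Real.norm_eq_abs, abs_of_pos (lt_of_le_of_lt h3 h2)]
    intro h
    apply hB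
    rw [Matrix.det_mul, h, zero_mul]
  have hunit : IsUnit A.det := isUnit_iff_ne_zero.2 hdet
  refine ⟨hunit, ?_⟩
  -- Step: A z ≥ 0 implies z ≥ 0
  have nonneg : ∀ z : Fin n → ℝ, (∀ i, 0 ≤ (A *ᵥ z) i) → ∀ i, 0 ≤ z i := by
    intro z hAz
    by_contra hcon
    push_neg at hcon
    obtain ⟨m, hm⟩ := hcon
    -- minimize z i / x i
    obtain ⟨i₀, _, hi₀⟩ := Finset.exists_min_image Finset.univ (fun i => z i / x i) ⟨m, Finset.mem_univ m⟩
    set t : ℝ := -(z i₀ / x i₀) with ht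
    have htpos : 0 < t := by
      have h1 : z i₀ / x i₀ ≤ z m / x m := hi₀ m (Finset.mem_univ m)
      have h2 : z m / x m < 0 := div_neg_of_neg_of_pos hm (hxpos m)
      simp only [ht]; linarith
    set w : Fin n → ℝ := fun j => z j + t * x j with hw
    have hwnn : ∀ j, 0 ≤ w j := by
      intro j
      have h1 : z i₀ / x i₀ ≤ z j / x j := hi₀ j (Finset.mem_univ j)
      have h2 : (z i₀ / x i₀) * x j ≤ (z j / x j) * x j :=
        mul_le_mul_of_nonneg_right h1 (hx j)
      rw [div_mul_cancel₀ _ (ne_of_gt (hxpos j))] at h2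
      simp only [hw, ht]
      nlinarith
    have hwi₀ : w i₀ = 0 := by
      simp only [hw, ht]
      have h := div_mul_cancel₀ (z i₀) (ne_of_gt (hxpos i₀))
      linear_combination -h
    have hle : (A *ᵥ w) i₀ ≤ 0 := zaux A hZ w hwnn i₀ hwi₀
    have heq : (A *ᵥ w) i₀ = (A *ᵥ z) i₀ + t * (A *ᵥ x) i₀ := by
      have : w = z + t • x := by funext j; simp [hw, smul_eq_mul]
      rw [this, Matrix.mulVec_add, Matrix.mulVec_smul]
      simp [smul_eq_mul]
    have : 0 < (A *ᵥ w) i₀ := by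
      rw [heq]
      have := hAz i₀
      have := hAx i₀
      nlinarith
    linarith
  -- Strict positivity of columns of A⁻¹
  intro i k
  set z : Fin n → ℝ := fun j => A⁻¹ j k with hz
  have hAz : A *ᵥ z = fun j => (1 : Matrix (Fin n) (Fin n) ℝ) j k := by
    funext j
    have : (A *ᵥ z) j = (A * A⁻¹) j k := by
      simp [Matrix.mul_apply, Matrix.mulVec, dotProduct, hz]
    rw [this, Matrix.mul_nonsing_inv A hunit]
  have hAznn : ∀ j, 0 ≤ (A *ᵥ z) j := by
    intro j; rw [hAz]
    by_cases h : j = k <;> simp [Matrix.one_apply, h]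
  have hznn : ∀ j, 0 ≤ z j := nonneg z hAznn
  have hzsome : ∃ j, 0 < z j := by
    by_contra hcon
    push_neg at hcon
    have hz0 : z = 0 := by funext j; exact le_antisymm (hcon j) (hznn j)
    have : (A *ᵥ z) k = 1 := by rw [hAz]; simp [Matrix.one_apply]
    rw [hz0] at this
    simp [Matrix.mulVec_zero] at this
  -- show z i > 0 via irreducibility
  by_contra hcon
  push_neg at hcon
  have hzi : z i = 0 := le_antisymm hcon (hznn i)
  set S : Finset (Fin n) := Finset.univ.filter (fun j => z j = 0) with hS
  have hiS : i ∈ S := by simp [hS, hzi]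
  have hSne : S.Nonempty := ⟨i, hiS⟩
  have hSnu : S ≠ Finset.univ := by
    obtain ⟨j, hj⟩ := hzsome
    intro h
    have : j ∈ S := h ▸ Finset.mem_univ j
    simp [hS] at this
    linarith
  obtain ⟨p, hpS, q, hqS, hApq⟩ := hirr S hSne hSnu
  have hzp : z p = 0 := by simpa [hS] using hpS
  have hzq : 0 < z q := by
    simp [hS] at hqS
    exact lt_of_le_of_ne (hznn q) (Ne.symm hqS)
  have hpq : p ≠ q := by
    intro h; rw [h] at hzp; linarith
  have hApq' : A p q < 0 := lt_of_le_of_ne (hZ p q hpq) hApq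
  have hneg : (A *ᵥ z) p < 0 := by
    have hsum : (A *ᵥ z) p = ∑ j, A p j * z j := by
      simp [Matrix.mulVec, dotProduct]
    rw [hsum, ← Finset.add_sum_erase _ _ (Finset.mem_univ q)]
    have h1 : A p q * z q < 0 := mul_neg_of_neg_of_pos hApq' hzq
    have h2 : ∑ j ∈ Finset.univ.erase q, A p j * z j ≤ 0 := by
      apply Finset.sum_nonpos
      intro j _
      by_cases h : j = p
      · simp [h, hzp]
      · exact mul_nonpos_of_nonpos_of_nonneg (hZ p j (Ne.symm h)) (hznn j)
    linarith
  exact absurd (hAznn p) (not_le.2 hneg)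
end

section
/- Let A ∈ ℝ^{n×n} be an irreducible Z-matrix and suppose there exists x ∈ ℝⁿ with x ≥ 0 entrywise and Ax > 0 entrywise. Then −A is Hurwitz, i.e., every complex eigenvalue of A has strictly positive real part. -/
/-!
Since `A` is a Z-matrix, a zero entry `x i` would force `(A x) i ≤ 0`, so `x > 0`. Gershgorin's
theorem for the rescaled matrix `diag(x)⁻¹ A diag(x)` puts every eigenvalue `μ` in a disc
`‖μ - A i i‖ ≤ ∑ j ≠ i, |A i j| x j / x i`, and `(A x) i > 0` says exactly that this radius is
less than `A i i`; such a disc lies in the open right half-plane.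
-/

open Matrix

namespace Matrix

variable {ι : Type*} [Fintype ι]

theorem pos_of_nonpos_offDiag_of_mulVec_pos {A : Matrix ι ι ℝ}
    (hA : ∀ i j, i ≠ j → A i j ≤ 0) {x : ι → ℝ} (hx : 0 ≤ x) (hAx : ∀ i, 0 < (A *ᵥ x) i)
    (i : ι) : 0 < x i := by
  refine (hx i).lt_of_ne fun hxi => (hAx i).not_ge ?_
  refine Finset.sum_nonpos fun j _ => ?_
  rcases eq_or_ne i j with rfl | hij
  · simp [← hxi]
  · exact mul_nonpos_of_nonpos_of_nonneg (hA i j hij) (hx j)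

variable [DecidableEq ι]

theorem exists_norm_sub_diag_mul_le_of_mulVec_eq_smul {K : Type*} [NormedField K]
    {A : Matrix ι ι K} {μ : K} {v : ι → K} (hv : v ≠ 0) (hAv : A *ᵥ v = μ • v)
    {w : ι → ℝ} (hw : ∀ i, 0 < w i) :
    ∃ i, ‖μ - A i i‖ * w i ≤ ∑ j ∈ Finset.univ.erase i, ‖A i j‖ * w j := by
  obtain ⟨j, hj⟩ := Function.ne_iff.mp hv
  obtain ⟨i, -, hi⟩ :=
    Finset.exists_max_image Finset.univ (fun k => ‖v k‖ / w k) ⟨j, Finset.mem_univ j⟩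
  set c := ‖v i‖ / w i
  have hvi : ‖v i‖ = c * w i := (div_mul_cancel₀ _ (hw i).ne').symm
  have hc : 0 < c := (div_pos (norm_pos_iff.mpr hj) (hw j)).trans_le (hi j (Finset.mem_univ j))
  have hvk : ∀ k, ‖v k‖ ≤ c * w k := fun k => (div_le_iff₀ (hw k)).mp (hi k (Finset.mem_univ k))
  have hrow : (μ - A i i) * v i = ∑ j ∈ Finset.univ.erase i, A i j * v j := by
    have := congrFun hAv i
    simp only [mulVec, dotProduct, Pi.smul_apply, smul_eq_mul] at this
    rw [← Finset.add_sum_erase _ _ (Finset.mem_univ i)] at this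
    linear_combination -this
  refine ⟨i, le_of_mul_le_mul_left ?_ hc⟩
  calc c * (‖μ - A i i‖ * w i) = ‖(μ - A i i) * v i‖ := by
        rw [norm_mul, hvi]; ring
    _ ≤ ∑ j ∈ Finset.univ.erase i, ‖A i j‖ * ‖v j‖ := by
        rw [hrow]; exact (norm_sum_le _ _).trans_eq (by simp_rw [norm_mul])
    _ ≤ ∑ j ∈ Finset.univ.erase i, ‖A i j‖ * (c * w j) :=
        Finset.sum_le_sum fun j _ => mul_le_mul_of_nonneg_left (hvk j) (norm_nonneg _)
    _ = c * ∑ j ∈ Finset.univ.erase i, ‖A i j‖ * w j := by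
        rw [Finset.mul_sum]; exact Finset.sum_congr rfl fun _ _ => by ring

theorem sum_erase_abs_mul_lt_diag_mul {A : Matrix ι ι ℝ} (hA : ∀ i j, i ≠ j → A i j ≤ 0)
    {x : ι → ℝ} {i : ι} (hAx : 0 < (A *ᵥ x) i) :
    ∑ j ∈ Finset.univ.erase i, |A i j| * x j < A i i * x i := by
  have hrow : (A *ᵥ x) i = A i i * x i + ∑ j ∈ Finset.univ.erase i, A i j * x j :=
    (Finset.add_sum_erase _ _ (Finset.mem_univ i)).symm
  have hoff : ∑ j ∈ Finset.univ.erase i, |A i j| * x j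
      = -∑ j ∈ Finset.univ.erase i, A i j * x j := by
    rw [← Finset.sum_neg_distrib]
    refine Finset.sum_congr rfl fun j hj => ?_
    rw [abs_of_nonpos (hA i j (Finset.ne_of_mem_erase hj).symm), neg_mul]
  linarith

end Matrix

theorem Complex.re_pos_of_norm_sub_ofReal_lt {μ : ℂ} {a : ℝ} (h : ‖μ - a‖ < a) : 0 < μ.re := by
  have := Complex.abs_re_le_norm (μ - a)
  simp only [Complex.sub_re, Complex.ofReal_re] at this
  linarith [neg_abs_le (μ.re - a)]

theorem stmt7_general {n : ℕ} (A : Matrix (Fin n) (Fin n) ℝ)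
    (hZ : ∀ i k, i ≠ k → A i k ≤ 0)
    (x : Fin n → ℝ) (hx : ∀ i, 0 ≤ x i) (hAx : ∀ i, 0 < (A *ᵥ x) i) :
    ∀ (μ : ℂ) (v : Fin n → ℂ), v ≠ 0 →
      (A.map Complex.ofReal) *ᵥ v = μ • v → 0 < μ.re := by
  intro μ v hv hev
  have hxpos := pos_of_nonpos_offDiag_of_mulVec_pos hZ hx hAx
  obtain ⟨i, hi⟩ := exists_norm_sub_diag_mul_le_of_mulVec_eq_smul hv hev hxpos
  simp only [map_apply, Complex.norm_real, Real.norm_eq_abs] at hi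
  have hlt := hi.trans_lt (sum_erase_abs_mul_lt_diag_mul hZ (hAx i))
  exact Complex.re_pos_of_norm_sub_ofReal_lt (lt_of_mul_lt_mul_right hlt (hxpos i).le)

theorem stmt7 {n : ℕ} (A : Matrix (Fin n) (Fin n) ℝ)
    (hZ : ∀ i k, i ≠ k → A i k ≤ 0)
    (hirr : ∀ S : Finset (Fin n), S.Nonempty → S ≠ Finset.univ →
      ∃ i ∈ S, ∃ j, j ∉ S ∧ A i j ≠ 0)
    (x : Fin n → ℝ) (hx : ∀ i, 0 ≤ x i) (hAx : ∀ i, 0 < (A *ᵥ x) i) :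
    ∀ (μ : ℂ) (v : Fin n → ℂ), v ≠ 0 →
      (A.map Complex.ofReal) *ᵥ v = μ • v → 0 < μ.re :=
  stmt7_general A hZ x hx hAx
end

section
/- The set C = {(x,y,z) ∈ ℝ³ : x > 0, y > 0, x·y ≥ z²} is convex, and the function f(x,y,z) = √(x·y − z²) is concave on C. -/
private lemma key10 (a b c x y z : ℝ) (ha : 0 < a) (hb : 0 < b) (hx : 0 < x)
    (hy : 0 < y) (hc : c ^ 2 ≤ a * b) (hz : z ^ 2 ≤ x * y) :
    2 * Real.sqrt (a * b - c ^ 2) * Real.sqrt (x * y - z ^ 2) + 2 * c * z ≤ a * y + b * x := by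
  set s1 := Real.sqrt (a * b - c ^ 2) with hs1def
  set s2 := Real.sqrt (x * y - z ^ 2) with hs2def
  have h1 : s1 ^ 2 = a * b - c ^ 2 := Real.sq_sqrt (by linarith)
  have h2 : s2 ^ 2 = x * y - z ^ 2 := Real.sq_sqrt (by linarith)
  have hs1 : 0 ≤ s1 := Real.sqrt_nonneg _
  have hs2 : 0 ≤ s2 := Real.sqrt_nonneg _
  set t1 := Real.sqrt (a * b) with ht1def
  set t2 := Real.sqrt (x * y) with ht2def
  have g1 : t1 ^ 2 = a * b := Real.sq_sqrt (by positivity)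
  have g2 : t2 ^ 2 = x * y := Real.sq_sqrt (by positivity)
  have ht1 : 0 ≤ t1 := Real.sqrt_nonneg _
  have ht2 : 0 ≤ t2 := Real.sqrt_nonneg _
  -- step 1 : 2*t1*t2 ≤ a*y + b*x
  have step1 : 2 * t1 * t2 ≤ a * y + b * x := by
    have hsq : (2 * t1 * t2) ^ 2 ≤ (a * y + b * x) ^ 2 := by
      nlinarith [sq_nonneg (a * y - b * x)]
    have h2t : 0 ≤ 2 * t1 * t2 := by positivity
    have hab : 0 ≤ a * y + b * x := by positivity
    calc 2 * t1 * t2 = Real.sqrt ((2 * t1 * t2) ^ 2) := (Real.sqrt_sq h2t).symm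
      _ ≤ Real.sqrt ((a * y + b * x) ^ 2) := Real.sqrt_le_sqrt hsq
      _ = a * y + b * x := Real.sqrt_sq hab
  -- step 2 : s1*s2 + c*z ≤ t1*t2
  have step2 : s1 * s2 + c * z ≤ t1 * t2 := by
    nlinarith [sq_nonneg (s1 * z - c * s2), sq_nonneg (s1 * z + c * s2),
      mul_nonneg hs1 hs2, mul_nonneg ht1 ht2,
      sq_nonneg (t1 * t2 - s1 * s2 - c * z), sq_nonneg (t1 * t2 + s1 * s2 + c * z)]
  nlinarith [step1, step2]

private lemma poscomb {l m a x : ℝ} (hl : 0 ≤ l) (hm : 0 ≤ m) (h : l + m = 1)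
    (ha : 0 < a) (hx : 0 < x) : 0 < l * a + m * x := by
  rcases hl.lt_or_eq with h1 | h1
  · exact add_pos_of_pos_of_nonneg (mul_pos h1 ha) (mul_nonneg hm hx.le)
  · have hm1 : m = 1 := by linarith
    rw [← h1, hm1]; simpa using hx

private lemma memC {a b c x y z l m : ℝ} (ha : 0 < a) (hb : 0 < b) (hc : c ^ 2 ≤ a * b)
    (hx : 0 < x) (hy : 0 < y) (hz : z ^ 2 ≤ x * y)
    (hl : 0 ≤ l) (hm : 0 ≤ m) (hlm : l + m = 1) :
    (l * c + m * z) ^ 2 ≤ (l * a + m * x) * (l * b + m * y) := by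
  have key := key10 a b c x y z ha hb hx hy hc hz
  have hs1 : 0 ≤ Real.sqrt (a * b - c ^ 2) := Real.sqrt_nonneg _
  have hs2 : 0 ≤ Real.sqrt (x * y - z ^ 2) := Real.sqrt_nonneg _
  have hmul : 0 ≤ l * m := mul_nonneg hl hm
  nlinarith [mul_nonneg hmul (mul_nonneg hs1 hs2), sq_nonneg l, sq_nonneg m,
    mul_nonneg hmul (sub_nonneg.mpr key),
    mul_nonneg (sq_nonneg l) (sub_nonneg.mpr hc),
    mul_nonneg (sq_nonneg m) (sub_nonneg.mpr hz)]

theorem stmt10 :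
    Convex ℝ {u : ℝ × ℝ × ℝ | 0 < u.1 ∧ 0 < u.2.1 ∧ u.2.2 ^ 2 ≤ u.1 * u.2.1} ∧
      ConcaveOn ℝ {u : ℝ × ℝ × ℝ | 0 < u.1 ∧ 0 < u.2.1 ∧ u.2.2 ^ 2 ≤ u.1 * u.2.1}
        (fun u => Real.sqrt (u.1 * u.2.1 - u.2.2 ^ 2)) := by
  have hconv : Convex ℝ {u : ℝ × ℝ × ℝ | 0 < u.1 ∧ 0 < u.2.1 ∧ u.2.2 ^ 2 ≤ u.1 * u.2.1} := by
    rintro ⟨a, b, c⟩ ⟨ha, hb, hc⟩ ⟨x, y, z⟩ ⟨hx, hy, hz⟩ l m hl hm hlm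
    refine ⟨poscomb hl hm hlm ha hx, poscomb hl hm hlm hb hy, ?_⟩
    exact memC ha hb hc hx hy hz hl hm hlm
  refine ⟨hconv, hconv, ?_⟩
  rintro ⟨a, b, c⟩ ⟨ha, hb, hc⟩ ⟨x, y, z⟩ ⟨hx, hy, hz⟩ l m hl hm hlm
  simp only [Prod.smul_mk, smul_eq_mul, Prod.mk_add_mk]
  set s1 := Real.sqrt (a * b - c ^ 2) with hs1def
  set s2 := Real.sqrt (x * y - z ^ 2) with hs2def
  have h1 : s1 ^ 2 = a * b - c ^ 2 := Real.sq_sqrt (by linarith)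
  have h2 : s2 ^ 2 = x * y - z ^ 2 := Real.sq_sqrt (by linarith)
  have hs1 : 0 ≤ s1 := Real.sqrt_nonneg _
  have hs2 : 0 ≤ s2 := Real.sqrt_nonneg _
  have key := key10 a b c x y z ha hb hx hy hc hz
  rw [← hs1def, ← hs2def] at key
  have hE : (l * s1 + m * s2) ^ 2 ≤ (l * a + m * x) * (l * b + m * y) - (l * c + m * z) ^ 2 := by
    have hmul : 0 ≤ l * m := mul_nonneg hl hm
    have e1 : l ^ 2 * s1 ^ 2 = l ^ 2 * (a * b - c ^ 2) := by rw [h1]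
    have e2 : m ^ 2 * s2 ^ 2 = m ^ 2 * (x * y - z ^ 2) := by rw [h2]
    nlinarith [mul_nonneg hmul (sub_nonneg.mpr key), e1, e2]
  have hnn : 0 ≤ l * s1 + m * s2 := by positivity
  calc l * s1 + m * s2 = Real.sqrt ((l * s1 + m * s2) ^ 2) := (Real.sqrt_sq hnn).symm
    _ ≤ Real.sqrt ((l * a + m * x) * (l * b + m * y) - (l * c + m * z) ^ 2) :=
        Real.sqrt_le_sqrt hE
end

section
/- Let σ : ℝⁿ → ℝ^E be a linear map assigning to each p ∈ ℝⁿ a real value σ(p)_{ik} for each edge {i,k} ∈ E. Then the set 𝒮 = {(p,q) ∈ ℝⁿ × ℝⁿ : there exists v ∈ ℝⁿ with v_i > 0 for all i (convention v_0 = 1), v_i v_k ≥ σ(p)_{ik}² for every edge {i,k} ∈ E, and 𝐁_i v_i − Σ_{k∈N(i)} B_{ik}·√(v_i v_k − σ(p)_{ik}²) ≤ q_i for all i ∈ {1,…,n}} is a convex subset of ℝⁿ × ℝⁿ. -/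
open Finset Matrix

noncomputable section

lemma mink_sq (x1 y1 s1 x2 y2 s2 : ℝ) (hx1 : 0 ≤ x1) (hy1 : 0 ≤ y1)
    (hx2 : 0 ≤ x2) (hy2 : 0 ≤ y2) (h1 : s1^2 ≤ x1*y1) (h2 : s2^2 ≤ x2*y2) :
    (Real.sqrt (x1*y1 - s1^2) + Real.sqrt (x2*y2 - s2^2))^2
      ≤ (x1+x2)*(y1+y2) - (s1+s2)^2 := by
  set u := Real.sqrt (x1*y1 - s1^2) with hu_def
  set v := Real.sqrt (x2*y2 - s2^2) with hv_def
  have hu0 : 0 ≤ u := Real.sqrt_nonneg _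
  have hv0 : 0 ≤ v := Real.sqrt_nonneg _
  have hu : u^2 = x1*y1 - s1^2 := Real.sq_sqrt (by linarith)
  have hv : v^2 = x2*y2 - s2^2 := Real.sq_sqrt (by linarith)
  have hAB : (u*v + s1*s2)^2 ≤ (x1*y2)*(x2*y1) := by
    nlinarith [sq_nonneg (u*s2 - v*s1)]
  have hA : 0 ≤ x1*y2 := mul_nonneg hx1 hy2
  have hB : 0 ≤ x2*y1 := mul_nonneg hx2 hy1
  have key : 2*(u*v + s1*s2) ≤ x1*y2 + x2*y1 := by
    rcases le_or_gt (u*v + s1*s2) 0 with h | h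
    · linarith
    · nlinarith [sq_nonneg (x1*y2 - x2*y1)]
  nlinarith

lemma mink_ab (a b x1 y1 s1 x2 y2 s2 : ℝ) (ha : 0 ≤ a) (hb : 0 ≤ b)
    (hx1 : 0 ≤ x1) (hy1 : 0 ≤ y1) (hx2 : 0 ≤ x2) (hy2 : 0 ≤ y2)
    (h1 : s1^2 ≤ x1*y1) (h2 : s2^2 ≤ x2*y2) :
    (a * Real.sqrt (x1*y1 - s1^2) + b * Real.sqrt (x2*y2 - s2^2))^2
      ≤ (a*x1+b*x2)*(a*y1+b*y2) - (a*s1+b*s2)^2 := by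
  have h := mink_sq (a*x1) (a*y1) (a*s1) (b*x2) (b*y2) (b*s2)
    (mul_nonneg ha hx1) (mul_nonneg ha hy1) (mul_nonneg hb hx2) (mul_nonneg hb hy2)
    (by nlinarith [sq_nonneg a]) (by nlinarith [sq_nonneg b])
  have e1 : (a*x1)*(a*y1) - (a*s1)^2 = a^2*(x1*y1 - s1^2) := by ring
  have e2 : (b*x2)*(b*y2) - (b*s2)^2 = b^2*(x2*y2 - s2^2) := by ring
  rw [e1, e2] at h
  rw [show a^2*(x1*y1 - s1^2) = (x1*y1 - s1^2)*a^2 by ring,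
      show b^2*(x2*y2 - s2^2) = (x2*y2 - s2^2)*b^2 by ring,
      Real.sqrt_mul' _ (sq_nonneg a), Real.sqrt_mul' _ (sq_nonneg b),
      Real.sqrt_sq ha, Real.sqrt_sq hb] at h
  calc (a * Real.sqrt (x1*y1 - s1^2) + b * Real.sqrt (x2*y2 - s2^2))^2
      = (Real.sqrt (x1*y1 - s1^2) * a + Real.sqrt (x2*y2 - s2^2) * b)^2 := by ring
    _ ≤ _ := by linarith [h]

lemma mink_sqrt (a b x1 y1 s1 x2 y2 s2 : ℝ) (ha : 0 ≤ a) (hb : 0 ≤ b)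
    (hx1 : 0 ≤ x1) (hy1 : 0 ≤ y1) (hx2 : 0 ≤ x2) (hy2 : 0 ≤ y2)
    (h1 : s1^2 ≤ x1*y1) (h2 : s2^2 ≤ x2*y2) :
    a * Real.sqrt (x1*y1 - s1^2) + b * Real.sqrt (x2*y2 - s2^2)
      ≤ Real.sqrt ((a*x1+b*x2)*(a*y1+b*y2) - (a*s1+b*s2)^2) := by
  have h := mink_ab a b x1 y1 s1 x2 y2 s2 ha hb hx1 hy1 hx2 hy2 h1 h2
  have hL : 0 ≤ a * Real.sqrt (x1*y1 - s1^2) + b * Real.sqrt (x2*y2 - s2^2) :=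
    add_nonneg (mul_nonneg ha (Real.sqrt_nonneg _)) (mul_nonneg hb (Real.sqrt_nonneg _))
  calc a * Real.sqrt (x1*y1 - s1^2) + b * Real.sqrt (x2*y2 - s2^2)
      = Real.sqrt ((a * Real.sqrt (x1*y1 - s1^2) + b * Real.sqrt (x2*y2 - s2^2))^2) :=
        (Real.sqrt_sq hL).symm
    _ ≤ _ := Real.sqrt_le_sqrt h

theorem stmt11 {n : ℕ} (hn : 1 ≤ n)
    (B : Matrix (Fin (n + 1)) (Fin (n + 1)) ℝ)
    (hBsymm : ∀ i k, B i k = B k i)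
    (hBdiag : ∀ i, B i i = 0)
    (hBnonneg : ∀ i k, 0 ≤ B i k)
    (G : SimpleGraph (Fin (n + 1)))
    (hGadj : ∀ i k, G.Adj i k ↔ 0 < B i k)
    (hGtree : G.IsTree)
    (σ : (Fin n → ℝ) →ₗ[ℝ] (Fin (n + 1) → Fin (n + 1) → ℝ)) :
    Convex ℝ {pq : (Fin n → ℝ) × (Fin n → ℝ) |
      ∃ v : Fin n → ℝ,
        (∀ i, 0 < v i) ∧
        (∀ i k, 0 < B i k → (σ pq.1 i k) ^ 2 ≤ extV v i * extV v k) ∧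
        (∀ i : Fin n,
          (∑ k, B i.succ k) * v i -
              ∑ k ∈ Finset.univ.filter (fun k => 0 < B i.succ k),
                B i.succ k * Real.sqrt (extV v i.succ * extV v k - (σ pq.1 i.succ k) ^ 2) ≤
            pq.2 i)} := by
  intro pq1 h1 pq2 h2 a b ha hb hab
  obtain ⟨v1, hv1pos, hv1s, hv1q⟩ := h1
  obtain ⟨v2, hv2pos, hv2s, hv2q⟩ := h2
  set w : Fin n → ℝ := fun i => a * v1 i + b * v2 i with hw
  have hσ : ∀ i k, σ ((a • pq1 + b • pq2).1) i k
      = a * σ pq1.1 i k + b * σ pq2.1 i k := by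
    intro i k
    simp [Prod.fst_add, Prod.smul_fst, map_add, LinearMap.map_smul]
  have hext : ∀ j, extV w j = a * extV v1 j + b * extV v2 j := by
    intro j
    refine Fin.cases ?_ (fun i => ?_) j
    · simp [extV]; linarith
    · simp [extV, hw]
  have hext1pos : ∀ j, 0 < extV v1 j := by
    intro j; refine Fin.cases ?_ (fun i => ?_) j
    · simp [extV]
    · simpa [extV] using hv1pos i
  have hext2pos : ∀ j, 0 < extV v2 j := by
    intro j; refine Fin.cases ?_ (fun i => ?_) j
    · simp [extV]
    · simpa [extV] using hv2pos i
  have hwpos : ∀ i, 0 < w i := by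
    intro i
    rcases ha.lt_or_eq with h | h
    · have := mul_nonneg hb (hv2pos i).le
      have := mul_pos h (hv1pos i)
      simp only [hw]; linarith
    · have hb1 : b = 1 := by linarith
      simp only [hw, ← h, hb1]; simpa using hv2pos i
  refine ⟨w, hwpos, ?_, ?_⟩
  · intro i k hBik
    rw [hσ, hext, hext]
    have h := mink_ab a b (extV v1 i) (extV v1 k) (σ pq1.1 i k)
      (extV v2 i) (extV v2 k) (σ pq2.1 i k) ha hb
      (hext1pos i).le (hext1pos k).le (hext2pos i).le (hext2pos k).le
      (hv1s i k hBik) (hv2s i k hBik)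
    nlinarith [sq_nonneg (a * Real.sqrt (extV v1 i * extV v1 k - (σ pq1.1 i k)^2)
      + b * Real.sqrt (extV v2 i * extV v2 k - (σ pq2.1 i k)^2))]
  · intro i
    have hq2 : (a • pq1 + b • pq2).2 i = a * pq1.2 i + b * pq2.2 i := by
      simp [Prod.snd_add, Prod.smul_snd]
    rw [hq2]
    have hsum : a * (∑ k ∈ Finset.univ.filter (fun k => 0 < B i.succ k),
          B i.succ k * Real.sqrt (extV v1 i.succ * extV v1 k - (σ pq1.1 i.succ k) ^ 2))
        + b * (∑ k ∈ Finset.univ.filter (fun k => 0 < B i.succ k),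
          B i.succ k * Real.sqrt (extV v2 i.succ * extV v2 k - (σ pq2.1 i.succ k) ^ 2))
        ≤ ∑ k ∈ Finset.univ.filter (fun k => 0 < B i.succ k),
          B i.succ k * Real.sqrt (extV w i.succ * extV w k
            - (σ ((a • pq1 + b • pq2).1) i.succ k) ^ 2) := by
      rw [Finset.mul_sum, Finset.mul_sum, ← Finset.sum_add_distrib]
      refine Finset.sum_le_sum (fun k hk => ?_)
      have hBik : 0 < B i.succ k := by simpa using hk
      have h := mink_sqrt a b (extV v1 i.succ) (extV v1 k) (σ pq1.1 i.succ k)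
        (extV v2 i.succ) (extV v2 k) (σ pq2.1 i.succ k) ha hb
        (hext1pos i.succ).le (hext1pos k).le (hext2pos i.succ).le (hext2pos k).le
        (hv1s i.succ k hBik) (hv2s i.succ k hBik)
      rw [hσ, hext, hext]
      calc a * (B i.succ k * Real.sqrt (extV v1 i.succ * extV v1 k - (σ pq1.1 i.succ k) ^ 2))
            + b * (B i.succ k * Real.sqrt (extV v2 i.succ * extV v2 k - (σ pq2.1 i.succ k) ^ 2))
          = B i.succ k * (a * Real.sqrt (extV v1 i.succ * extV v1 k - (σ pq1.1 i.succ k) ^ 2)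
            + b * Real.sqrt (extV v2 i.succ * extV v2 k - (σ pq2.1 i.succ k) ^ 2)) := by ring
        _ ≤ _ := mul_le_mul_of_nonneg_left h hBik.le
    have h1' := hv1q i
    have h2' := hv2q i
    have hwi : w i = a * v1 i + b * v2 i := rfl
    have e : (∑ k, B i.succ k) * w i
        = a * ((∑ k, B i.succ k) * v1 i) + b * ((∑ k, B i.succ k) * v2 i) := by
      rw [hwi]; ring
    have ha1 := mul_le_mul_of_nonneg_left h1' ha
    have hb1 := mul_le_mul_of_nonneg_left h2' hb
    rw [mul_sub] at ha1 hb1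
    linarith
end
end
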